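/- For every ε with 0 < ε ≪ 1, there exist a 4-point metric space S = {p,a,b,q} on the real line, a 1-spanner G' of S, an augmented graph G with 6 edges containing G', and a matching F = {{p,a},{b,q}} in G, such that the ratio of the shortest-path distance between p and q in G \ F to that in K_S \ F equals 3 - ε. Hence the stretch bound 3t for 1-faulty-degree spanners obtained from the construction is tight. -/
import Mathlib

open Real

/-- Length of a walk in a graph whose vertices lie in a metric space:
the sum of the metric distances of consecutive vertices. -/
noncomputable def wlen {V : Type*} [PseudoMetricSpace V] {G : SimpleGraph V} {u v : V}
    (w : G.Walk u v) : ℝ :=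
  (w.darts.map fun d : G.Dart => dist d.toProd.1 d.toProd.2).sum

/-- Shortest-path distance between two vertices of a metrically weighted graph. -/
noncomputable def gdist {V : Type*} [PseudoMetricSpace V] (G : SimpleGraph V) (p q : V) : ℝ :=
  sInf {l : ℝ | ∃ w : G.Walk p q, wlen w = l}

/-- The set `F` of edges, viewed as a graph, has maximum degree at most `f`. -/
def maxDegLe {V : Type*} (F : Set (Sym2 V)) (f : ℕ) : Prop :=
  ∀ v : V, {e | e ∈ F ∧ v ∈ e}.encard ≤ (f : ℕ∞)

lemma wlen_nil {V : Type*} [PseudoMetricSpace V] {G : SimpleGraph V} {u : V} :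
    wlen (SimpleGraph.Walk.nil : G.Walk u u) = 0 := by simp [wlen]

lemma wlen_cons {V : Type*} [PseudoMetricSpace V] {G : SimpleGraph V} {u v w : V}
    (h : G.Adj u v) (p : G.Walk v w) :
    wlen (SimpleGraph.Walk.cons h p) = dist u v + wlen p := by
  simp [wlen]

lemma wlen_nonneg {V : Type*} [PseudoMetricSpace V] {G : SimpleGraph V} {u v : V}
    (w : G.Walk u v) : 0 ≤ wlen w := by
  apply List.sum_nonneg; intro x hx; simp only [List.mem_map] at hx
  obtain ⟨d, _, rfl⟩ := hx; exact dist_nonneg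

lemma wlen_reverse {V : Type*} [PseudoMetricSpace V] {G : SimpleGraph V} {u v : V}
    (w : G.Walk u v) : wlen w.reverse = wlen w := by
  have hf : ((fun d : G.Dart => dist d.toProd.1 d.toProd.2) ∘ SimpleGraph.Dart.symm) =
      fun d : G.Dart => dist d.toProd.1 d.toProd.2 := by
    funext d; simp [SimpleGraph.Dart.symm, dist_comm]
  simp [wlen, SimpleGraph.Walk.darts_reverse, List.map_reverse, List.sum_reverse,
    List.map_map, hf]

lemma gdist_le_wlen {V : Type*} [PseudoMetricSpace V] {G : SimpleGraph V} {p q : V}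
    (w : G.Walk p q) : gdist G p q ≤ wlen w :=
  csInf_le ⟨0, by rintro l ⟨w', rfl⟩; exact wlen_nonneg w'⟩ ⟨w, rfl⟩

lemma wlen_potential {V : Type*} [PseudoMetricSpace V] {G : SimpleGraph V} (φ : V → ℝ)
    (hφ : ∀ x y, G.Adj x y → |φ x - φ y| ≤ dist x y) :
    ∀ {u v : V} (w : G.Walk u v), |φ u - φ v| ≤ wlen w := by
  intro u v w
  induction w with
  | nil => simp [wlen_nil]
  | @cons u' v' w' h p ih =>
    rw [wlen_cons]
    calc |φ u' - φ w'| ≤ |φ u' - φ v'| + |φ v' - φ w'| := abs_sub_le _ _ _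
    _ ≤ dist u' v' + wlen p := add_le_add (hφ _ _ h) ih

lemma le_gdist {V : Type*} [PseudoMetricSpace V] {G : SimpleGraph V} {p q : V} (c : ℝ)
    (w0 : G.Walk p q) (h : ∀ w : G.Walk p q, c ≤ wlen w) : c ≤ gdist G p q :=
  le_csInf ⟨wlen w0, w0, rfl⟩ (by rintro l ⟨w, rfl⟩; exact h w)

lemma real_dist_of_le {x y : ℝ} (h : x ≤ y) : dist x y = y - x := by
  rw [Real.dist_eq, abs_sub_comm, abs_of_nonneg (by linarith)]

theorem stmt6 :
    ∀ ε : ℝ, 0 < ε → ε < 1 →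
    ∃ (p a b q : ℝ) (G' G : SimpleGraph ℝ) (F : Set (Sym2 ℝ)),
      -- the four points on the real line
      p = 0 ∧ a = ε / (4 - 2 * ε) ∧ b = 1 + ε / (4 - 2 * ε) ∧
        q = 1 + 2 * (ε / (4 - 2 * ε)) ∧
      -- G' connects the points in left-to-right order and is a 1-spanner for S
      (∀ x y : ℝ, G'.Adj x y ↔ s(x, y) = s(p, a) ∨ s(x, y) = s(a, b) ∨ s(x, y) = s(b, q)) ∧
      (∀ x ∈ ({p, a, b, q} : Set ℝ), ∀ y ∈ ({p, a, b, q} : Set ℝ),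
        gdist G' x y ≤ 1 * dist x y) ∧
      -- G contains G', the edges {p,b} and {a,q}, and has at most 6 edges
      G' ≤ G ∧ G.Adj p b ∧ G.Adj a q ∧ G.edgeSet.ncard ≤ 6 ∧
      -- F is a matching in G
      F = {s(p, a), s(b, q)} ∧ F ⊆ G.edgeSet ∧ maxDegLe F 1 ∧
      -- the stretch ratio is exactly 3 - ε
      gdist (G.deleteEdges F) p q =
        (3 - ε) * gdist ((⊤ : SimpleGraph ℝ).deleteEdges F) p q := by
  intro ε hε0 hε1
  set e : ℝ := ε / (4 - 2 * ε) with he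
  have h4 : (0:ℝ) < 4 - 2 * ε := by linarith
  have he0 : 0 < e := div_pos hε0 h4
  have he1 : e < 1 := by
    rw [he, div_lt_one h4]; linarith
  -- the graphs
  set S3 : Set (Sym2 ℝ) := {s(0, e), s(e, 1 + e), s(1 + e, 1 + 2 * e)} with hS3
  set S5 : Set (Sym2 ℝ) :=
    {s(0, e), s(e, 1 + e), s(1 + e, 1 + 2 * e), s(0, 1 + e), s(e, 1 + 2 * e)} with hS5
  set G' : SimpleGraph ℝ := SimpleGraph.fromEdgeSet S3 with hG'
  set G : SimpleGraph ℝ := SimpleGraph.fromEdgeSet S5 with hG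
  set F : Set (Sym2 ℝ) := {s(0, e), s(1 + e, 1 + 2 * e)} with hF
  -- distances
  have hd1 : dist (0:ℝ) e = e := by rw [real_dist_of_le (by linarith)]; ring
  have hd2 : dist e (1 + e) = 1 := by rw [real_dist_of_le (by linarith)]; ring
  have hd3 : dist (1 + e) (1 + 2 * e) = e := by rw [real_dist_of_le (by linarith)]; ring
  have hd4 : dist (0:ℝ) (1 + e) = 1 + e := by rw [real_dist_of_le (by linarith)]; ring
  have hd5 : dist e (1 + 2 * e) = 1 + e := by rw [real_dist_of_le (by linarith)]; ring
  have hd6 : dist (0:ℝ) (1 + 2 * e) = 1 + 2 * e := by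
    rw [real_dist_of_le (by linarith)]; ring
  -- adjacency in G'
  have hpa : G'.Adj 0 e := by
    rw [hG', SimpleGraph.fromEdgeSet_adj]
    exact ⟨by simp [hS3], by intro h; linarith⟩
  have hab : G'.Adj e (1 + e) := by
    rw [hG', SimpleGraph.fromEdgeSet_adj]
    exact ⟨by simp [hS3], by intro h; linarith⟩
  have hbq : G'.Adj (1 + e) (1 + 2 * e) := by
    rw [hG', SimpleGraph.fromEdgeSet_adj]
    exact ⟨by simp [hS3], by intro h; linarith⟩
  refine ⟨0, e, 1 + e, 1 + 2 * e, G', G, F, rfl, rfl, rfl, rfl, ?_, ?_, ?_, ?_, ?_, ?_, rfl,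
    ?_, ?_, ?_⟩
  · -- adjacency characterization of G'
    intro x y
    rw [hG', SimpleGraph.fromEdgeSet_adj]
    constructor
    · rintro ⟨hm, -⟩; simpa [hS3] using hm
    · rintro (h | h | h) <;>
        refine ⟨by simp [hS3, h], ?_⟩ <;>
        rw [Sym2.eq_iff] at h <;>
        rcases h with ⟨rfl, rfl⟩ | ⟨rfl, rfl⟩ <;> intro hxy <;> linarith
  · -- 1-spanner property
    intro x hx y hy
    rw [one_mul]
    have bnd : ∀ {u v : ℝ} (w : G'.Walk u v), wlen w ≤ dist u v → gdist G' u v ≤ dist u v :=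
      fun w h => le_trans (gdist_le_wlen w) h
    have bnd' : ∀ {u v : ℝ} (w : G'.Walk u v), wlen w ≤ dist u v → gdist G' v u ≤ dist v u :=
      fun {u v} w h => by
        refine le_trans (gdist_le_wlen w.reverse) ?_
        rw [wlen_reverse, dist_comm v u]; exact h
    have hself : ∀ u : ℝ, gdist G' u u ≤ dist u u := fun u =>
      le_trans (gdist_le_wlen (.nil)) (by rw [wlen_nil]; exact dist_nonneg)
    have bpa := bnd (.cons hpa .nil) (by rw [wlen_cons, wlen_nil]; linarith)
    have bab := bnd (.cons hab .nil) (by rw [wlen_cons, wlen_nil]; linarith)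
    have bbq := bnd (.cons hbq .nil) (by rw [wlen_cons, wlen_nil]; linarith)
    have bpb := bnd (.cons hpa (.cons hab .nil))
      (by rw [wlen_cons, wlen_cons, wlen_nil, hd1, hd2, hd4]; linarith)
    have baq := bnd (.cons hab (.cons hbq .nil))
      (by rw [wlen_cons, wlen_cons, wlen_nil, hd2, hd3, hd5]; linarith)
    have bpq := bnd (.cons hpa (.cons hab (.cons hbq .nil)))
      (by rw [wlen_cons, wlen_cons, wlen_cons, wlen_nil, hd1, hd2, hd3, hd6]; linarith)
    have bpa' := bnd' (.cons hpa .nil) (by rw [wlen_cons, wlen_nil]; linarith)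
    have bab' := bnd' (.cons hab .nil) (by rw [wlen_cons, wlen_nil]; linarith)
    have bbq' := bnd' (.cons hbq .nil) (by rw [wlen_cons, wlen_nil]; linarith)
    have bpb' := bnd' (.cons hpa (.cons hab .nil))
      (by rw [wlen_cons, wlen_cons, wlen_nil, hd1, hd2, hd4]; linarith)
    have baq' := bnd' (.cons hab (.cons hbq .nil))
      (by rw [wlen_cons, wlen_cons, wlen_nil, hd2, hd3, hd5]; linarith)
    have bpq' := bnd' (.cons hpa (.cons hab (.cons hbq .nil)))
      (by rw [wlen_cons, wlen_cons, wlen_cons, wlen_nil, hd1, hd2, hd3, hd6]; linarith)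
    simp only [Set.mem_insert_iff, Set.mem_singleton_iff] at hx hy
    rcases hx with rfl | rfl | rfl | rfl <;> rcases hy with rfl | rfl | rfl | rfl
    · exact hself _
    · exact bpa
    · exact bpb
    · exact bpq
    · exact bpa'
    · exact hself _
    · exact bab
    · exact baq
    · exact bpb'
    · exact bab'
    · exact hself _
    · exact bbq
    · exact bpq'
    · exact baq'
    · exact bbq'
    · exact hself _
  · -- G' ≤ G
    rw [hG', hG]
    apply SimpleGraph.fromEdgeSet_mono
    intro x hx; simp only [hS3, Set.mem_insert_iff, Set.mem_singleton_iff] at hx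
    simp only [hS5, Set.mem_insert_iff, Set.mem_singleton_iff]; tauto
  · -- G.Adj p b
    rw [hG, SimpleGraph.fromEdgeSet_adj]
    exact ⟨by simp [hS5], by intro h; linarith⟩
  · -- G.Adj a q
    rw [hG, SimpleGraph.fromEdgeSet_adj]
    exact ⟨by simp [hS5], by intro h; linarith⟩
  · -- edge count
    rw [hG, SimpleGraph.edgeSet_fromEdgeSet]
    have hfin : S5.Finite := by
      rw [hS5]
      exact (Set.finite_singleton _).insert _ |>.insert _ |>.insert _ |>.insert _
    calc (S5 \ {e | e.IsDiag}).ncard ≤ S5.ncard :=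
          Set.ncard_le_ncard Set.diff_subset hfin
    _ ≤ 5 := by
        rw [hS5]
        refine le_trans (Set.ncard_insert_le _ _) ?_
        have h2 := Set.ncard_insert_le (s(e, 1 + e))
          ({s(1 + e, 1 + 2 * e), s(0, 1 + e), s(e, 1 + 2 * e)} : Set (Sym2 ℝ))
        have h3 := Set.ncard_insert_le (s(1 + e, 1 + 2 * e))
          ({s(0, 1 + e), s(e, 1 + 2 * e)} : Set (Sym2 ℝ))
        have h4' := Set.ncard_insert_le (s(0, 1 + e)) ({s(e, 1 + 2 * e)} : Set (Sym2 ℝ))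
        have h5 : ({s(e, 1 + 2 * e)} : Set (Sym2 ℝ)).ncard = 1 := Set.ncard_singleton _
        omega
    _ ≤ 6 := by norm_num
  · -- F ⊆ G.edgeSet
    rw [hF, hG, SimpleGraph.edgeSet_fromEdgeSet]
    rintro x (rfl | rfl)
    · exact ⟨by simp [hS5], by simp [Sym2.isDiag_iff_proj_eq]; intro h; linarith⟩
    · exact ⟨by simp [hS5], by simp [Sym2.isDiag_iff_proj_eq]; intro h; linarith⟩
  · -- maxDegLe F 1
    intro v
    simp only [Nat.cast_one]
    apply Set.encard_le_one_iff.mpr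
    rintro x y ⟨hx, hvx⟩ ⟨hy, hvy⟩
    rw [hF] at hx hy
    rcases hx with rfl | rfl <;> rcases hy with rfl | rfl
    · rfl
    · exfalso
      rw [Sym2.mem_iff] at hvx hvy
      rcases hvx with rfl | rfl <;> rcases hvy with h | h <;> linarith
    · exfalso
      rw [Sym2.mem_iff] at hvx hvy
      rcases hvx with rfl | rfl <;> rcases hvy with h | h <;> linarith
    · rfl
  · -- stretch ratio
    -- adjacencies in G \ F
    have hnF : ∀ x y : ℝ, s(x, y) = s(e, 1 + e) ∨ s(x, y) = s(0, 1 + e) ∨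
        s(x, y) = s(e, 1 + 2 * e) → s(x, y) ∉ F := by
      rintro x y h hmem
      rw [hF, Set.mem_insert_iff, Set.mem_singleton_iff] at hmem
      rcases hmem with hm | hm <;> rcases h with h | h | h <;>
        rw [hm] at h <;> rw [Sym2.eq_iff] at h <;>
        rcases h with ⟨h1, h2⟩ | ⟨h1, h2⟩ <;> linarith
    have hGF : ∀ x y : ℝ, s(x, y) ∈ S5 → x ≠ y → s(x, y) ∉ F →
        (G.deleteEdges F).Adj x y := by
      intro x y h hne hnf
      rw [SimpleGraph.deleteEdges_adj, hG, SimpleGraph.fromEdgeSet_adj]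
      exact ⟨⟨h, hne⟩, hnf⟩
    have hDpb : (G.deleteEdges F).Adj 0 (1 + e) :=
      hGF _ _ (by simp [hS5]) (by intro h; linarith) (hnF _ _ (Or.inr (Or.inl rfl)))
    have hDba : (G.deleteEdges F).Adj (1 + e) e := by
      refine SimpleGraph.Adj.symm (hGF _ _ (by simp [hS5]) (by intro h; linarith)
        (hnF _ _ (Or.inl rfl)))
    have hDaq : (G.deleteEdges F).Adj e (1 + 2 * e) :=
      hGF _ _ (by simp [hS5]) (by intro h; linarith) (hnF _ _ (Or.inr (Or.inr rfl)))
    -- value of gdist in G \ F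
    have hgd1 : gdist (G.deleteEdges F) 0 (1 + 2 * e) = 3 + 2 * e := by
      apply le_antisymm
      · refine le_trans (gdist_le_wlen (.cons hDpb (.cons hDba (.cons hDaq .nil)))) ?_
        rw [wlen_cons, wlen_cons, wlen_cons, wlen_nil, hd4, dist_comm (1 + e) e, hd2, hd5]
        linarith
      · -- potential function
        set φ : ℝ → ℝ := fun x => if x = 0 then 0 else if x = e then 2 + e
          else if x = 1 + e then 1 + e else if x = 1 + 2 * e then 3 + 2 * e else 0 with hφdef
        have na0 : e ≠ 0 := by intro h; linarith
        have nb0 : 1 + e ≠ 0 := by intro h; linarith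
        have nbe : 1 + e ≠ e := by intro h; linarith
        have nq0 : 1 + 2 * e ≠ 0 := by intro h; linarith
        have nqe : 1 + 2 * e ≠ e := by intro h; linarith
        have nqb : 1 + 2 * e ≠ 1 + e := by intro h; linarith
        have hφp : φ 0 = 0 := by simp [hφdef]
        have hφa : φ e = 2 + e := by simp [hφdef, na0]
        have hφb : φ (1 + e) = 1 + e := by simp [hφdef, nb0, nbe]
        have hφq : φ (1 + 2 * e) = 3 + 2 * e := by simp [hφdef, nq0, nqe, nqb]
        have hφ : ∀ x y : ℝ, (G.deleteEdges F).Adj x y → |φ x - φ y| ≤ dist x y := by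
          intro x y hxy
          rw [SimpleGraph.deleteEdges_adj, hG, SimpleGraph.fromEdgeSet_adj] at hxy
          obtain ⟨⟨hm, hne⟩, hnf⟩ := hxy
          rw [hS5] at hm
          simp only [Set.mem_insert_iff, Set.mem_singleton_iff] at hm
          rcases hm with h | h | h | h | h
          · exact absurd (by rw [hF]; exact Or.inl h) hnf
          · rw [Sym2.eq_iff] at h
            rcases h with ⟨rfl, rfl⟩ | ⟨rfl, rfl⟩
            · rw [hφa, hφb, hd2]; rw [abs_le]; constructor <;> linarith
            · rw [hφa, hφb, dist_comm, hd2]; rw [abs_le]; constructor <;> linarith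
          · exact absurd (by rw [hF]; exact Or.inr h) hnf
          · rw [Sym2.eq_iff] at h
            rcases h with ⟨rfl, rfl⟩ | ⟨rfl, rfl⟩
            · rw [hφp, hφb, hd4]; rw [abs_le]; constructor <;> linarith
            · rw [hφp, hφb, dist_comm, hd4]; rw [abs_le]; constructor <;> linarith
          · rw [Sym2.eq_iff] at h
            rcases h with ⟨rfl, rfl⟩ | ⟨rfl, rfl⟩
            · rw [hφa, hφq, hd5]; rw [abs_le]; constructor <;> linarith
            · rw [hφa, hφq, dist_comm, hd5]; rw [abs_le]; constructor <;> linarith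
        refine le_gdist _ (.cons hDpb (.cons hDba (.cons hDaq .nil))) ?_
        intro w
        have := wlen_potential φ hφ w
        rw [hφp, hφq] at this
        calc (3:ℝ) + 2 * e = |0 - (3 + 2 * e)| := by
              rw [abs_sub_comm, sub_zero, abs_of_nonneg (by linarith)]
        _ ≤ wlen w := this
    -- value of gdist in K \ F
    have hKpq : ((⊤ : SimpleGraph ℝ).deleteEdges F).Adj 0 (1 + 2 * e) := by
      rw [SimpleGraph.deleteEdges_adj]
      refine ⟨by simp [SimpleGraph.top_adj]; intro h; linarith, ?_⟩
      intro hmem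
      rw [hF, Set.mem_insert_iff, Set.mem_singleton_iff] at hmem
      rcases hmem with h | h <;> rw [Sym2.eq_iff] at h <;>
        rcases h with ⟨h1, h2⟩ | ⟨h1, h2⟩ <;> linarith
    have hgd2 : gdist ((⊤ : SimpleGraph ℝ).deleteEdges F) 0 (1 + 2 * e) = 1 + 2 * e := by
      apply le_antisymm
      · refine le_trans (gdist_le_wlen (.cons hKpq .nil)) ?_
        rw [wlen_cons, wlen_nil, hd6]; linarith
      · refine le_gdist _ (.cons hKpq .nil) ?_
        intro w
        have hid : ∀ x y : ℝ, ((⊤ : SimpleGraph ℝ).deleteEdges F).Adj x y →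
            |id x - id y| ≤ dist x y := by
          intro x y _; rw [Real.dist_eq]; simp
        have := wlen_potential id hid w
        simp only [id] at this
        calc (1:ℝ) + 2 * e = |0 - (1 + 2 * e)| := by
              rw [abs_sub_comm, sub_zero, abs_of_nonneg (by linarith)]
        _ ≤ wlen w := this
    rw [hgd1, hgd2, he]
    field_simp
    ring
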